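/- Let w be an area sequence and let c_0, c_1, …, c_k be its admissible insertion positions taken in admissible order. Then for every 0 ≤ i ≤ k, the word ins_{c_i}(w) has exactly i + 2 admissible insertion positions. -/

import Mathlib

/-- The `i`-th letter of the word `w` (`1`-indexed, as in the paper);
defaults to `0` out of range. -/
def get1 (w : List ℕ) (i : ℕ) : ℕ := w.getD (i - 1) 0

/-- `w` is the area sequence of a Dyck path: the first letter is `0` and each
letter exceeds the previous one by at most one. -/
def IsAreaSeq (w : List ℕ) : Prop :=
  (w ≠ [] → get1 w 1 = 0) ∧ ∀ i, 1 ≤ i → i < w.length → get1 w (i + 1) ≤ get1 w i + 1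

/-- Insertion at position `i` (for `0 ≤ i ≤ n`): `ins w 0` prepends a `0`, and
for `1 ≤ i ≤ n`, `ins w i` inserts the letter `w_i + 1` just after position `i`. -/
def ins (w : List ℕ) (i : ℕ) : List ℕ :=
  w.take i ++ (if i = 0 then 0 else get1 w i + 1) :: w.drop i

/-- The area statistic: the sum of the letters. -/
def area (w : List ℕ) : ℕ := w.sum

/-- The dinv statistic: `dinv w = Σ_i d_i` where `d_i` is the number of `j > i`
with `w_j = w_i` or `w_j = w_i - 1`. -/
def dinv (w : List ℕ) : ℕ :=
  ∑ i ∈ Finset.Icc 1 w.length,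
    ((Finset.Ioc i w.length).filter
      (fun j => get1 w j = get1 w i ∨ get1 w j + 1 = get1 w i)).card

/-- The maximal value of a word (`0` for the empty word). -/
def maxVal (w : List ℕ) : ℕ := w.foldr max 0

/-- Positions of the letters of maximal value `m`. -/
def Maxb (w : List ℕ) : Finset ℕ :=
  (Finset.Icc 1 w.length).filter (fun i => get1 w i = maxVal w)

/-- Positions `i` with `w_i = m - 1` such that all letters after position `i`
are `< m`. -/
def Maxa (w : List ℕ) : Finset ℕ :=
  (Finset.Icc 1 w.length).filter (fun i =>
    get1 w i + 1 = maxVal w ∧ ∀ j ∈ Finset.Ioc i w.length, get1 w j < maxVal w)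

/-- The position of the leftmost letter equal to the maximal value `m` in the
rightmost block of consecutive letters equal to `m`. -/
def i0 (w : List ℕ) : ℕ :=
  ((Finset.Icc 1 w.length).filter (fun i =>
    get1 w i = maxVal w ∧ (i = 1 ∨ get1 w (i - 1) ≠ maxVal w))).sup id

/-- The admissible insertion positions of `w`, listed in admissible order:
the elements of `Maxb w` in decreasing order, then the elements of `Maxa w`
in decreasing order, then `i0 w - 1`.  The empty word has the single
admissible insertion position `0`. -/
def admissible (w : List ℕ) : List ℕ :=
  if w = [] then [0]
  else ((Maxb w).sort (· ≤ ·)).reverse ++ ((Maxa w).sort (· ≤ ·)).reverse ++ [i0 w - 1]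

/-- Auxiliary version of the map `ψ`, reading the reversed word. -/
def psiRev : List ℕ → List ℕ
  | [] => []
  | a :: u => ins (psiRev u) ((admissible (psiRev u)).getD a 0)

/-- The map `ψ`: `ψ(ε) = ε` and `ψ(u a) = ins_{c_a}(ψ(u))` where
`c_0, c_1, …, c_k` are the admissible insertion positions of `ψ(u)` in
admissible order. -/
def psi (w : List ℕ) : List ℕ := psiRev w.reverse

/-- The bounce sequence: `b_1 = 0`, and `b_i = b_{i-1} + 1` if
`b_{i-1} + 1 ≤ w_i`, otherwise `b_i = 0`. -/
def bseq (w : List ℕ) : ℕ → ℕ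
  | 0 => 0
  | 1 => 0
  | (i + 2) => if bseq w (i + 1) + 1 ≤ get1 w (i + 2) then bseq w (i + 1) + 1 else 0

/-- The bounces of `w`: positions `1 < i ≤ n` with `b_i = 0`. -/
def bounces (w : List ℕ) : Finset ℕ :=
  (Finset.Icc 2 w.length).filter (fun i => bseq w i = 0)

/-- The bounce statistic: the sum of the reversed positions `n - i + 1` of the
bounces of `w`. -/
def bounce (w : List ℕ) : ℕ := ∑ i ∈ bounces w, (w.length - i + 1)

open Finset

/-! Write `m` for the maximum of `w`. Each admissible insertion puts in a letter that is a
maximum of the new word, so `#Maxb` of the new word is the number of its letters equal to that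
maximum, and its `Maxa` consists of the positions of `w` to the right of the insertion point that
satisfy the `Maxa` condition for the new maximum, shifted by one.

* Inserting after the `i`-th element `c` of `Maxb w` (counted from the right) creates a unique
  letter `m + 1`; the new `Maxa` is given by the `i` letters `m` to the right of `c`, so there
  are `1 + i + 1` admissible positions.
* Inserting after the `k`-th element `c` of `Maxa w`, or at `i0 w - 1`, creates one more letter
  `m`; the new `Maxa` is the part of `Maxa w` to the right of `c`, which has `k` elements,
  resp. all `#(Maxa w)` of them, since `Maxa w` lies to the right of the block starting at
  `i0 w`. This gives `#(Maxb w) + 1 + k + 1` resp. `#(Maxb w) + 1 + #(Maxa w) + 1` positions,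
  which is `i + 2` in both cases.
-/

lemma List.length_filter_gt_getElem {α : Type*} [LinearOrder α] {l : List α}
    (hl : l.Pairwise (· > ·)) {i : ℕ} (hi : i < l.length) :
    (l.filter (fun x => l[i] < x)).length = i := by
  induction l generalizing i with
  | nil => simp at hi
  | cons a l ih =>
    obtain ⟨ha, hl⟩ := List.pairwise_cons.1 hl
    cases i with
    | zero =>
      simpa [List.filter_eq_nil_iff] using fun b hb => (ha b hb).le
    | succ i =>
      simp [ha _ (List.getElem_mem _), ih hl]

section

variable {α : Type*} [LinearOrder α] (s : Finset α) {i : ℕ} (d : α)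

lemma Finset.getD_reverse_sort_mem (hi : i < #s) : (s.sort (· ≤ ·)).reverse.getD i d ∈ s := by
  rw [List.getD_eq_getElem _ _ (by simpa using hi)]
  exact (mem_sort _).1 (List.mem_reverse.1 (List.getElem_mem _))

lemma Finset.card_filter_gt_getD_reverse_sort (hi : i < #s) :
    #{x ∈ s | (s.sort (· ≤ ·)).reverse.getD i d < x} = i := by
  set l := (s.sort (· ≤ ·)).reverse
  have hi' : i < l.length := by simpa [l] using hi
  have hl : l.Pairwise (· > ·) := List.pairwise_reverse.2 s.sortedLT_sort.pairwise
  have hs : s = l.toFinset := by simp [l]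
  rw [List.getD_eq_getElem _ _ hi']
  clear_value l
  subst hs
  have hfilter := List.toFinset_filter l (fun x => decide (l[i] < x))
  simp only [decide_eq_true_eq] at hfilter
  rw [← hfilter, List.toFinset_card_of_nodup (hl.nodup.filter _)]
  simpa using List.length_filter_gt_getElem hl hi'

end

lemma card_filter_get1_eq_count (w : List ℕ) (a : ℕ) :
    #{i ∈ Icc 1 w.length | get1 w i = a} = w.count a := by
  induction w using List.reverseRecOn with
  | nil => simp
  | append_singleton u b ih =>
    have hget : ∀ i ∈ Icc 1 u.length, get1 (u ++ [b]) i = get1 u i := fun i hi => by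
      simp only [get1]; rw [List.getD_append _ _ _ _ (by simp at hi; omega)]
    rw [List.length_append, List.length_singleton, ← insert_Icc_right_eq_Icc_add_one (by omega),
      filter_insert, filter_congr (fun i hi => by rw [hget i hi]), List.count_append, ← ih]
    have hlast : get1 (u ++ [b]) (u.length + 1) = b := by simp [get1]
    rw [hlast]
    split_ifs with h <;> simp [h]

lemma maxVal_eq_sup (w : List ℕ) : maxVal w = w.toFinset.sup id :=
  List.foldr_sup_eq_sup_toFinset w

lemma le_maxVal {w : List ℕ} {a : ℕ} (h : a ∈ w) : a ≤ maxVal w := by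
  rw [maxVal_eq_sup]; exact le_sup (f := id) (List.mem_toFinset.2 h)

lemma maxVal_mem {w : List ℕ} (h : w ≠ []) : maxVal w ∈ w := by
  obtain ⟨a, ha, hmax⟩ := exists_mem_eq_sup _ (List.toFinset_nonempty_iff _ |>.2 h) id
  rw [maxVal_eq_sup, hmax]; exact List.mem_toFinset.1 ha

lemma get1_le_maxVal (w : List ℕ) (i : ℕ) : get1 w i ≤ maxVal w := by
  rw [get1, List.getD_eq_getElem?_getD]
  cases h : w[i - 1]? with
  | none => simp
  | some a => exact le_maxVal (List.mem_of_getElem? h)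

lemma List.Perm.maxVal_eq {w w' : List ℕ} (h : w.Perm w') : maxVal w = maxVal w' := by
  rw [maxVal_eq_sup, maxVal_eq_sup, List.toFinset_eq_of_perm _ _ h]

def insLetter (w : List ℕ) (c : ℕ) : ℕ := if c = 0 then 0 else get1 w c + 1

lemma ins_eq (w : List ℕ) (c : ℕ) : ins w c = w.take c ++ insLetter w c :: w.drop c := rfl

lemma ins_perm (w : List ℕ) (c : ℕ) : (ins w c).Perm (insLetter w c :: w) := by
  rw [ins_eq]
  exact List.perm_middle.trans (by rw [List.take_append_drop])

lemma length_ins (w : List ℕ) (c : ℕ) : (ins w c).length = w.length + 1 :=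
  (ins_perm w c).length_eq

lemma ins_ne_nil (w : List ℕ) (c : ℕ) : ins w c ≠ [] :=
  List.ne_nil_of_length_pos (by rw [length_ins]; omega)

lemma maxVal_ins (w : List ℕ) (c : ℕ) : maxVal (ins w c) = max (insLetter w c) (maxVal w) :=
  (ins_perm w c).maxVal_eq

lemma count_ins (w : List ℕ) (c a : ℕ) :
    (ins w c).count a = w.count a + if insLetter w c = a then 1 else 0 := by
  rw [(ins_perm w c).count_eq, List.count_cons]
  simp

section

variable {w : List ℕ} {c : ℕ}

lemma get1_ins_succ (hc : c ≤ w.length) : get1 (ins w c) (c + 1) = insLetter w c := by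
  rw [ins_eq, get1, List.getD_append_right _ _ _ _ (by simp)]
  simp [hc]

lemma get1_ins_succ_of_lt (hc : c ≤ w.length) {i : ℕ} (hi : c < i) :
    get1 (ins w c) (i + 1) = get1 w i := by
  obtain ⟨k, rfl⟩ := Nat.exists_eq_add_of_lt hi
  rw [ins_eq, get1, List.getD_append_right _ _ _ _ (by simp; omega)]
  simp [hc, get1, show c + k + 1 - c = k + 1 by omega]

end

def MaxaAt (w : List ℕ) (M : ℕ) : Finset ℕ :=
  {i ∈ Icc 1 w.length | get1 w i + 1 = M ∧ ∀ j ∈ Ioc i w.length, get1 w j < M}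

lemma card_Maxb (w : List ℕ) : #(Maxb w) = w.count (maxVal w) :=
  card_filter_get1_eq_count w _

lemma Maxa_eq_MaxaAt (w : List ℕ) : Maxa w = MaxaAt w (maxVal w) := rfl

lemma MaxaAt_maxVal_add_one (w : List ℕ) : MaxaAt w (maxVal w + 1) = Maxb w := by
  ext i
  simp only [MaxaAt, Maxb, mem_filter, Nat.add_right_cancel_iff, and_congr_right_iff]
  exact fun _ => and_iff_left fun j _ => Nat.lt_succ_of_le (get1_le_maxVal w j)

lemma Maxa_ins {w : List ℕ} {c : ℕ} (hc : c ≤ w.length) (h : maxVal w ≤ insLetter w c) :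
    Maxa (ins w c) = {i ∈ MaxaAt w (insLetter w c) | c < i}.image (· + 1) := by
  have hM : maxVal (ins w c) = insLetter w c := by rw [maxVal_ins, max_eq_left h]
  ext j
  simp only [Maxa, MaxaAt, mem_filter, mem_Icc, mem_Ioc, mem_image, length_ins, hM]
  constructor
  · rintro ⟨⟨hj1, hjn⟩, hj, hlater⟩
    have hcj : c + 1 < j := by
      by_contra hle
      rcases (not_lt.1 hle).lt_or_eq with hlt | rfl
      · exact lt_irrefl _ (get1_ins_succ hc ▸ hlater (c + 1) ⟨hlt, by omega⟩)
      · rw [get1_ins_succ hc] at hj; omega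
    obtain ⟨i, rfl⟩ : ∃ i, j = i + 1 := ⟨j - 1, by omega⟩
    refine ⟨i, ⟨⟨⟨by omega, by omega⟩, ?_, fun k hk => ?_⟩, by omega⟩, rfl⟩
    · rwa [get1_ins_succ_of_lt hc (by omega)] at hj
    · have := hlater (k + 1) ⟨by omega, by omega⟩
      rwa [get1_ins_succ_of_lt hc (by omega)] at this
  · rintro ⟨i, ⟨⟨⟨hi1, hin⟩, hi, hlater⟩, hci⟩, rfl⟩
    refine ⟨⟨by omega, by omega⟩, by rwa [get1_ins_succ_of_lt hc hci], fun k hk => ?_⟩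
    obtain ⟨k, rfl⟩ : ∃ k', k = k' + 1 := ⟨k - 1, by omega⟩
    rw [get1_ins_succ_of_lt hc (by omega)]
    exact hlater k ⟨by omega, by omega⟩

lemma length_admissible {w : List ℕ} (h : w ≠ []) :
    (admissible w).length = #(Maxb w) + #(Maxa w) + 1 := by
  simp [admissible, h, Finset.length_sort, Nat.add_assoc]

lemma admissible_getD_cases {w : List ℕ} (hne : w ≠ []) {i c : ℕ}
    (hi : i < (admissible w).length) (hc : (admissible w).getD i 0 = c) :
    (c ∈ Maxb w ∧ #{x ∈ Maxb w | c < x} = i) ∨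
    (c ∈ Maxa w ∧ #(Maxb w) + #{x ∈ Maxa w | c < x} = i) ∨
    (c = i0 w - 1 ∧ #(Maxb w) + #(Maxa w) = i) := by
  have hlen := length_admissible hne
  have hb : ((Maxb w).sort (· ≤ ·)).reverse.length = #(Maxb w) := by simp
  have ha : ((Maxa w).sort (· ≤ ·)).reverse.length = #(Maxa w) := by simp
  simp only [admissible, if_neg hne] at hc
  rcases lt_or_ge i #(Maxb w) with h1 | h1
  · rw [List.getD_append _ _ _ _ (by simp; omega), List.getD_append _ _ _ _ (by omega)] at hc
    subst hc
    exact Or.inl ⟨getD_reverse_sort_mem _ _ h1, card_filter_gt_getD_reverse_sort _ _ h1⟩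
  rcases lt_or_ge i (#(Maxb w) + #(Maxa w)) with h2 | h2
  · rw [List.getD_append _ _ _ _ (by simp; omega), List.getD_append_right _ _ _ _ (by omega),
      hb] at hc
    subst hc
    refine Or.inr (Or.inl ⟨getD_reverse_sort_mem _ _ (by omega), ?_⟩)
    rw [card_filter_gt_getD_reverse_sort _ _ (by omega)]
    omega
  · rw [List.getD_append_right _ _ _ _ (by simp; omega), List.length_append, hb, ha,
      show i - (#(Maxb w) + #(Maxa w)) = 0 by omega] at hc
    exact Or.inr (Or.inr ⟨hc.symm, by omega⟩)

lemma length_admissible_ins_of_mem_Maxb {w : List ℕ} {c : ℕ} (hc : c ∈ Maxb w) :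
    (admissible (ins w c)).length = #{x ∈ Maxb w | c < x} + 2 := by
  obtain ⟨hc, hcm⟩ := mem_filter.1 hc
  obtain ⟨hc1, hcn⟩ := mem_Icc.1 hc
  have hx : insLetter w c = maxVal w + 1 := by simp [insLetter, hcm, show c ≠ 0 by omega]
  have hnew : w.count (maxVal w + 1) = 0 :=
    List.count_eq_zero.2 fun h => (le_maxVal h).not_gt (Nat.lt_succ_self _)
  rw [length_admissible (ins_ne_nil w c), card_Maxb, maxVal_ins, hx, max_eq_left (by omega),
    count_ins, hx, if_pos rfl, hnew, Maxa_ins hcn (by omega), hx,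
    card_image_of_injective _ (add_left_injective 1), MaxaAt_maxVal_add_one]
  omega

lemma length_admissible_ins_of_insLetter_eq {w : List ℕ} {c : ℕ} (hc : c ≤ w.length)
    (hx : insLetter w c = maxVal w) :
    (admissible (ins w c)).length = #(Maxb w) + #{x ∈ Maxa w | c < x} + 2 := by
  rw [length_admissible (ins_ne_nil w c), card_Maxb, card_Maxb, maxVal_ins, hx, max_self,
    count_ins, hx, if_pos rfl, Maxa_ins hc hx.ge, hx,
    card_image_of_injective _ (add_left_injective 1), Maxa_eq_MaxaAt]
  omega

lemma length_admissible_ins_of_mem_Maxa {w : List ℕ} {c : ℕ} (hc : c ∈ Maxa w) :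
    (admissible (ins w c)).length = #(Maxb w) + #{x ∈ Maxa w | c < x} + 2 := by
  obtain ⟨hc, hcm, -⟩ := mem_filter.1 hc
  obtain ⟨hc1, hcn⟩ := mem_Icc.1 hc
  exact length_admissible_ins_of_insLetter_eq hcn (by rw [insLetter, if_neg (by omega), hcm])

lemma i0_le_length (w : List ℕ) : i0 w ≤ w.length :=
  Finset.sup_le fun _ hi => (mem_Icc.1 (mem_filter.1 hi).1).2

lemma i0_spec {w : List ℕ} (h : w ≠ []) :
    1 ≤ i0 w ∧ get1 w (i0 w) = maxVal w ∧ (i0 w = 1 ∨ get1 w (i0 w - 1) ≠ maxVal w) := by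
  have hMb : (Maxb w).Nonempty := by
    rw [← card_pos, card_Maxb]; exact List.count_pos_iff.2 (maxVal_mem h)
  set j := (Maxb w).min' hMb
  obtain ⟨hj, hjm⟩ := mem_filter.1 ((Maxb w).min'_mem hMb)
  obtain ⟨hj1, hjn⟩ := mem_Icc.1 hj
  have hblock : j = 1 ∨ get1 w (j - 1) ≠ maxVal w := by
    by_contra! hprev
    have := (Maxb w).min'_le _ (mem_filter.2 ⟨mem_Icc.2 ⟨by omega, by omega⟩, hprev.2⟩)
    omega
  have hS : ({i ∈ Icc 1 w.length |
      get1 w i = maxVal w ∧ (i = 1 ∨ get1 w (i - 1) ≠ maxVal w)} : Finset ℕ).Nonempty :=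
    ⟨j, mem_filter.2 ⟨hj, hjm, hblock⟩⟩
  obtain ⟨k, hk, hsup⟩ := exists_mem_eq_sup _ hS id
  rw [i0, hsup]
  obtain ⟨hk, hkm⟩ := mem_filter.1 hk
  exact ⟨(mem_Icc.1 hk).1, hkm⟩

lemma insLetter_i0_sub_one {w : List ℕ} (hw : IsAreaSeq w) (h : w ≠ []) :
    insLetter w (i0 w - 1) = maxVal w := by
  obtain ⟨h1, hm, hstart⟩ := i0_spec h
  by_cases h1' : i0 w = 1
  · rw [h1'] at hm
    rw [h1', insLetter, if_pos rfl, ← hm, hw.1 h]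
  · have hstep := hw.2 (i0 w - 1) (by omega) (by have := i0_le_length w; omega)
    rw [Nat.sub_add_cancel h1, hm] at hstep
    have := get1_le_maxVal w (i0 w - 1)
    have := hstart.resolve_left h1'
    rw [insLetter, if_neg (by omega)]
    omega

lemma i0_sub_one_lt_of_mem_Maxa {w : List ℕ} {x : ℕ} (hx : x ∈ Maxa w) : i0 w - 1 < x := by
  have h : w ≠ [] := by rintro rfl; simp [Maxa] at hx
  obtain ⟨h1, hm, -⟩ := i0_spec h
  by_contra hle
  have := (mem_filter.1 hx).2.2 (i0 w) (mem_Ioc.2 ⟨by omega, i0_le_length w⟩)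
  omega

lemma length_admissible_ins_i0_sub_one {w : List ℕ} (hw : IsAreaSeq w) (h : w ≠ []) :
    (admissible (ins w (i0 w - 1))).length = #(Maxb w) + #(Maxa w) + 2 := by
  rw [length_admissible_ins_of_insLetter_eq ((Nat.sub_le _ 1).trans (i0_le_length w))
    (insLetter_i0_sub_one hw h), filter_true_of_mem fun _ => i0_sub_one_lt_of_mem_Maxa]

/-- If `c_0, …, c_k` are the admissible insertion positions of an area sequence
`w` taken in admissible order, then the word obtained by inserting at `c_i` has
exactly `i + 2` admissible insertion positions. -/
theorem card_admissible_ins (w : List ℕ) (hw : IsAreaSeq w)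
    (i : ℕ) (hi : i < (admissible w).length) :
    (admissible (ins w ((admissible w).getD i 0))).length = i + 2 := by
  rcases eq_or_ne w [] with rfl | hne
  · obtain rfl : i = 0 := by simpa [admissible] using hi
    exact length_admissible_ins_of_insLetter_eq le_rfl rfl
  rcases admissible_getD_cases hne hi rfl with ⟨hc, hcard⟩ | ⟨hc, hcard⟩ | ⟨hc, hcard⟩
  · rw [length_admissible_ins_of_mem_Maxb hc, hcard]
  · rw [length_admissible_ins_of_mem_Maxa hc, hcard]
  · rw [hc, length_admissible_ins_i0_sub_one hw hne, ← hcard]
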